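/- Let (γ,f₁,f₂) be a pseudo-spherical spacelike framed immersion whose curvature has the form (α,ℓ̂,0,n̂), with ε̂ = ⟨f₁,f₁⟩, and assume α²(s)+ε̂n̂²(s) ≠ 0 and g(s) ≠ 0 for all s. If γ has a singular point at s₀ (i.e., α(s₀) = 0), then E(γ)(s₀) = ±(n̂(s₀)ℓ̂(s₀)γ(s₀) + α'(s₀)f₁(s₀)) / √|ε̂(α'(s₀))² - ℓ̂²(s₀)n̂²(s₀)|, and E(γ)'(s₀) = 0 if and only if 2ℓ̂(s₀)α'(s₀)n̂'(s₀) + n̂(s₀)(α'(s₀)ℓ̂'(s₀) - ℓ̂(s₀)α''(s₀)) = 0. -/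

import Mathlib

noncomputable section

/-- The index-2 pseudo-scalar product on `ℝ⁴₂`. -/
def pdot (u w : Fin 4 → ℝ) : ℝ :=
  -(u 0 * w 0) - u 1 * w 1 + u 2 * w 2 + u 3 * w 3

/-- 3×3 determinant. -/
def det3 (a b c d e f g h i : ℝ) : ℝ :=
  a * (e * i - f * h) - b * (d * i - f * g) + c * (d * h - e * g)

/-- The triple product `u×v×w` in `ℝ⁴₂`. -/
def tripleProd (u v w : Fin 4 → ℝ) : Fin 4 → ℝ :=
  ![ -det3 (u 1) (u 2) (u 3) (v 1) (v 2) (v 3) (w 1) (w 2) (w 3),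
      det3 (u 0) (u 2) (u 3) (v 0) (v 2) (v 3) (w 0) (w 2) (w 3),
      det3 (u 0) (u 1) (u 3) (v 0) (v 1) (v 3) (w 0) (w 1) (w 3),
     -det3 (u 0) (u 1) (u 2) (v 0) (v 1) (v 2) (w 0) (w 1) (w 2)]

namespace EvoluteAux

lemma pdot_comm (u v : Fin 4 → ℝ) : pdot u v = pdot v u := by simp [pdot]; ring

lemma tripleProd_apply (u v w : Fin 4 → ℝ) :
    tripleProd u v w 0 = -det3 (u 1) (u 2) (u 3) (v 1) (v 2) (v 3) (w 1) (w 2) (w 3) ∧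
    tripleProd u v w 1 = det3 (u 0) (u 2) (u 3) (v 0) (v 2) (v 3) (w 0) (w 2) (w 3) ∧
    tripleProd u v w 2 = det3 (u 0) (u 1) (u 3) (v 0) (v 1) (v 3) (w 0) (w 1) (w 3) ∧
    tripleProd u v w 3 = -det3 (u 0) (u 1) (u 2) (v 0) (v 1) (v 2) (w 0) (w 1) (w 2) := by
  refine ⟨rfl, rfl, rfl, rfl⟩

lemma pdot_trip_left (u v w : Fin 4 → ℝ) : pdot (tripleProd u v w) u = 0 := by
  simp [pdot, tripleProd, det3]; ring

lemma pdot_trip_mid (u v w : Fin 4 → ℝ) : pdot (tripleProd u v w) v = 0 := by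
  simp [pdot, tripleProd, det3]; ring

lemma pdot_trip_right (u v w : Fin 4 → ℝ) : pdot (tripleProd u v w) w = 0 := by
  simp [pdot, tripleProd, det3]; ring

lemma pdot_trip_trip (u v w : Fin 4 → ℝ) :
    pdot (tripleProd u v w) (tripleProd u v w) =
      det3 (pdot u u) (pdot u v) (pdot u w) (pdot v u) (pdot v v) (pdot v w)
        (pdot w u) (pdot w v) (pdot w w) := by
  simp [pdot, tripleProd, det3]; ring

end EvoluteAux

namespace EvoluteAux

open Finset in
theorem det_fin_four' (A : Matrix (Fin 4) (Fin 4) ℝ) :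
    A.det =
      A 0 0 * (A 1 1 * (A 2 2 * A 3 3 - A 2 3 * A 3 2) - A 1 2 * (A 2 1 * A 3 3 - A 2 3 * A 3 1)
        + A 1 3 * (A 2 1 * A 3 2 - A 2 2 * A 3 1))
      - A 0 1 * (A 1 0 * (A 2 2 * A 3 3 - A 2 3 * A 3 2) - A 1 2 * (A 2 0 * A 3 3 - A 2 3 * A 3 0)
        + A 1 3 * (A 2 0 * A 3 2 - A 2 2 * A 3 0))
      + A 0 2 * (A 1 0 * (A 2 1 * A 3 3 - A 2 3 * A 3 1) - A 1 1 * (A 2 0 * A 3 3 - A 2 3 * A 3 0)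
        + A 1 3 * (A 2 0 * A 3 1 - A 2 1 * A 3 0))
      - A 0 3 * (A 1 0 * (A 2 1 * A 3 2 - A 2 2 * A 3 1) - A 1 1 * (A 2 0 * A 3 2 - A 2 2 * A 3 0)
        + A 1 2 * (A 2 0 * A 3 1 - A 2 1 * A 3 0)) := by
  simp only [Matrix.det_succ_row_zero, ← Nat.not_even_iff_odd, Matrix.submatrix_apply,
    Fin.succ_zero_eq_one, Matrix.submatrix_submatrix, Matrix.det_unique, Fin.default_eq_zero,
    Function.comp_apply, Fin.succ_one_eq_two, Fin.sum_univ_succ, Fin.val_zero, Fin.zero_succAbove,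
    Finset.univ_unique, Fin.val_succ, Fin.val_eq_zero, Fin.succ_succAbove_zero,
    Finset.sum_singleton, Fin.succ_succAbove_one, Even.add_self, Fin.succ_succAbove_succ]
  simp only [show (Fin.succ 2 : Fin 4) = 3 from rfl,
    show Fin.succAbove (2 : Fin 4) (2 : Fin 3) = 3 from rfl,
    show Fin.succAbove (1 : Fin 4) (2 : Fin 3) = 3 from rfl,
    show Fin.castSucc (2 : Fin 3) = (2 : Fin 4) from rfl,
    show Fin.succAbove (3 : Fin 4) (2 : Fin 3) = 2 from rfl]
  ring

lemma spanning {u v w x : Fin 4 → ℝ} {ε : ℝ} (hε : ε = 1 ∨ ε = -1)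
    (huu : pdot u u = -1) (hvv : pdot v v = ε) (hww : pdot w w = -ε)
    (huv : pdot u v = 0) (huw : pdot u w = 0) (hvw : pdot v w = 0)
    (h1 : pdot x u = 0) (h2 : pdot x v = 0) (h3 : pdot x w = 0)
    (h4 : pdot x (tripleProd u v w) = 0) : x = 0 := by
  have hmm : pdot (tripleProd u v w) (tripleProd u v w) = 1 := by
    rw [pdot_trip_trip, huu, hvv, hww, huv, huw, hvw, pdot_comm v u, pdot_comm w u,
      pdot_comm w v, huv, huw, hvw]
    rcases hε with h | h <;> simp [det3, h]
  set m := tripleProd u v w with hm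
  set M : Matrix (Fin 4) (Fin 4) ℝ :=
    !![u 0, u 1, u 2, u 3; v 0, v 1, v 2, v 3; w 0, w 1, w 2, w 3; m 0, m 1, m 2, m 3] with hM
  have hdet : M.det = -1 := by
    rw [hM, det_fin_four']
    rw [← hmm]
    simp [hm, tripleProd, det3, pdot]
    ring
  have hdet0 : M.det ≠ 0 := by rw [hdet]; norm_num
  have hMx : M.mulVec ![-(x 0), -(x 1), x 2, x 3] = 0 := by
    simp only [pdot] at h1 h2 h3 h4
    funext i
    fin_cases i <;>
      simp [hM, Matrix.mulVec, dotProduct, Fin.sum_univ_four] <;>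
      linarith
  have hy := Matrix.eq_zero_of_mulVec_eq_zero hdet0 hMx
  funext i
  fin_cases i
  · have := congrFun hy 0; simp at this ⊢; linarith
  · have := congrFun hy 1; simp at this ⊢; linarith
  · have := congrFun hy 2; simpa using this
  · have := congrFun hy 3; simpa using this

end EvoluteAux

namespace EvoluteAux

lemma pdot_smul_left (c : ℝ) (u v : Fin 4 → ℝ) : pdot (c • u) v = c * pdot u v := by
  simp [pdot]; ring

lemma pdot_sub_left (a b c : Fin 4 → ℝ) : pdot (a - b) c = pdot a c - pdot b c := by
  simp [pdot]; ring

lemma pdot_add_left (a b c : Fin 4 → ℝ) : pdot (a + b) c = pdot a c + pdot b c := by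
  simp [pdot]; ring

lemma hasDerivAt_pdot {f g : ℝ → Fin 4 → ℝ} {f' g' : Fin 4 → ℝ} {x : ℝ}
    (hf : HasDerivAt f f' x) (hg : HasDerivAt g g' x) :
    HasDerivAt (fun s => pdot (f s) (g s)) (pdot f' (g x) + pdot (f x) g') x := by
  have h0 := hasDerivAt_pi.1 hf
  have k0 := hasDerivAt_pi.1 hg
  have key := ((((h0 0).mul (k0 0)).neg.sub ((h0 1).mul (k0 1))).add
    ((h0 2).mul (k0 2))).add ((h0 3).mul (k0 3))
  refine key.congr_deriv ?_
  simp [pdot]; ring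

lemma contDiffOn_apply {f : ℝ → Fin 4 → ℝ} {s : Set ℝ} (hf : ContDiffOn ℝ (⊤ : ℕ∞) f s) (i : Fin 4) :
    ContDiffOn ℝ (⊤ : ℕ∞) (fun t => f t i) s :=
  (ContinuousLinearMap.proj (R := ℝ) (φ := fun _ : Fin 4 => ℝ) i).contDiff.comp_contDiffOn hf

lemma contDiffOn_pdotc {f g : ℝ → Fin 4 → ℝ} {s : Set ℝ}
    (hf : ContDiffOn ℝ (⊤ : ℕ∞) f s) (hg : ContDiffOn ℝ (⊤ : ℕ∞) g s) :
    ContDiffOn ℝ (⊤ : ℕ∞) (fun t => pdot (f t) (g t)) s := by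
  have hfi := contDiffOn_apply hf
  have hgi := contDiffOn_apply hg
  exact ((((hfi 0).mul (hgi 0)).neg.sub ((hfi 1).mul (hgi 1))).add
    ((hfi 2).mul (hgi 2))).add ((hfi 3).mul (hgi 3))

lemma contDiffOn_tripc {f g h : ℝ → Fin 4 → ℝ} {s : Set ℝ}
    (hf : ContDiffOn ℝ (⊤ : ℕ∞) f s) (hg : ContDiffOn ℝ (⊤ : ℕ∞) g s) (hh : ContDiffOn ℝ (⊤ : ℕ∞) h s) :
    ContDiffOn ℝ (⊤ : ℕ∞) (fun t => tripleProd (f t) (g t) (h t)) s := by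
  have hfi := contDiffOn_apply hf
  have hgi := contDiffOn_apply hg
  have hhi := contDiffOn_apply hh
  apply contDiffOn_pi.2
  intro i
  fin_cases i <;>
    simp only [tripleProd, det3, Matrix.cons_val_zero, Matrix.cons_val_one, Matrix.head_cons,
      Matrix.cons_val_two, Matrix.tail_cons, Matrix.cons_val_three] <;>
  · apply_rules [ContDiffOn.add, ContDiffOn.sub, ContDiffOn.mul, ContDiffOn.neg]

end EvoluteAux

namespace EvoluteAux

lemma hda {E : Type*} [NormedAddCommGroup E] [NormedSpace ℝ E] {f : ℝ → E} {I : Set ℝ} {s : ℝ}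
    (hI : IsOpen I) (h : ContDiffOn ℝ (⊤ : ℕ∞) f I) (hs : s ∈ I) : HasDerivAt f (deriv f s) s :=
  ((h.differentiableOn (by simp)).differentiableAt (hI.mem_nhds hs)).hasDerivAt

lemma deriv_pdot_const {f g : ℝ → Fin 4 → ℝ} {f' g' : Fin 4 → ℝ} {s : ℝ} {I : Set ℝ}
    (hI : IsOpen I) (hs : s ∈ I) (hf : HasDerivAt f f' s) (hg : HasDerivAt g g' s) {c : ℝ}
    (hc : ∀ t ∈ I, pdot (f t) (g t) = c) : pdot f' (g s) + pdot (f s) g' = 0 := by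
  have h1 := hasDerivAt_pdot hf hg
  have h2 : (fun t => pdot (f t) (g t)) =ᶠ[nhds s] fun _ => c :=
    Filter.eventually_of_mem (hI.mem_nhds hs) hc
  exact h1.unique ((hasDerivAt_const s c).congr_of_eventuallyEq h2)

lemma transfer {f F : ℝ → ℝ} {I : Set ℝ} (hI : IsOpen I) {s₀ : ℝ} (hs₀ : s₀ ∈ I)
    (heq : ∀ s ∈ I, f s = F s) (hF : ContDiffOn ℝ (⊤ : ℕ∞) F I) :
    HasDerivAt f (deriv f s₀) s₀ ∧ HasDerivAt (deriv f) (deriv (deriv f) s₀) s₀ := by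
  have heq' : ∀ s ∈ I, f =ᶠ[nhds s] F := fun s hs =>
    Filter.eventually_of_mem (hI.mem_nhds hs) heq
  have e0 : f =ᶠ[nhds s₀] F := heq' s₀ hs₀
  have h1' : HasDerivAt f (deriv F s₀) s₀ := (hda hI hF hs₀).congr_of_eventuallyEq e0
  refine ⟨by rw [e0.deriv_eq]; exact h1', ?_⟩
  have hF' : ContDiffOn ℝ (⊤ : ℕ∞) (deriv F) I := hF.deriv_of_isOpen hI (by simp)
  have e1 : deriv f =ᶠ[nhds s₀] deriv F :=
    Filter.eventually_of_mem (hI.mem_nhds hs₀) (fun t ht => (heq' t ht).deriv_eq)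
  have h2' : HasDerivAt (deriv f) (deriv (deriv F) s₀) s₀ :=
    (hda hI hF' hs₀).congr_of_eventuallyEq e1
  rw [e1.deriv_eq]; exact h2'

end EvoluteAux
/-- `μ(s) = γ(s)×v₁(s)×v₂(s)`. -/
def muOf (γ v₁ v₂ : ℝ → Fin 4 → ℝ) (s : ℝ) : Fin 4 → ℝ :=
  tripleProd (γ s) (v₁ s) (v₂ s)

/-- Pseudo-spherical spacelike framed curve on the open interval `I`. -/
structure SpacelikeFramed (I : Set ℝ) (γ v₁ v₂ : ℝ → Fin 4 → ℝ) (ε : ℝ) : Prop where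
  smooth_γ : ContDiffOn ℝ (⊤ : ℕ∞) γ I
  smooth_v₁ : ContDiffOn ℝ (⊤ : ℕ∞) v₁ I
  smooth_v₂ : ContDiffOn ℝ (⊤ : ℕ∞) v₂ I
  eps : ε = 1 ∨ ε = -1
  ads : ∀ s ∈ I, pdot (γ s) (γ s) = -1
  normv₁ : ∀ s ∈ I, pdot (v₁ s) (v₁ s) = ε
  normv₂ : ∀ s ∈ I, pdot (v₂ s) (v₂ s) = -ε
  orth₁ : ∀ s ∈ I, pdot (γ s) (v₁ s) = 0
  orth₂ : ∀ s ∈ I, pdot (γ s) (v₂ s) = 0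
  orth₃ : ∀ s ∈ I, pdot (v₁ s) (v₂ s) = 0
  tangent₁ : ∀ s ∈ I, pdot (deriv γ s) (v₁ s) = 0
  tangent₂ : ∀ s ∈ I, pdot (deriv γ s) (v₂ s) = 0

def scurvA (γ v₁ v₂ : ℝ → Fin 4 → ℝ) (s : ℝ) : ℝ := pdot (deriv γ s) (muOf γ v₁ v₂ s)
def scurvL (ε : ℝ) (v₁ v₂ : ℝ → Fin 4 → ℝ) (s : ℝ) : ℝ := -ε * pdot (deriv v₁ s) (v₂ s)
def scurvM (γ v₁ v₂ : ℝ → Fin 4 → ℝ) (s : ℝ) : ℝ := pdot (deriv v₁ s) (muOf γ v₁ v₂ s)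
def scurvN (γ v₁ v₂ : ℝ → Fin 4 → ℝ) (s : ℝ) : ℝ := pdot (deriv v₂ s) (muOf γ v₁ v₂ s)

/-- Pseudo-spherical timelike framed curve on the open interval `I`. -/
structure TimelikeFramed (I : Set ℝ) (γ v₁ v₂ : ℝ → Fin 4 → ℝ) : Prop where
  smooth_γ : ContDiffOn ℝ (⊤ : ℕ∞) γ I
  smooth_v₁ : ContDiffOn ℝ (⊤ : ℕ∞) v₁ I
  smooth_v₂ : ContDiffOn ℝ (⊤ : ℕ∞) v₂ I
  ads : ∀ s ∈ I, pdot (γ s) (γ s) = -1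
  normv₁ : ∀ s ∈ I, pdot (v₁ s) (v₁ s) = 1
  normv₂ : ∀ s ∈ I, pdot (v₂ s) (v₂ s) = 1
  orth₁ : ∀ s ∈ I, pdot (γ s) (v₁ s) = 0
  orth₂ : ∀ s ∈ I, pdot (γ s) (v₂ s) = 0
  orth₃ : ∀ s ∈ I, pdot (v₁ s) (v₂ s) = 0
  tangent₁ : ∀ s ∈ I, pdot (deriv γ s) (v₁ s) = 0
  tangent₂ : ∀ s ∈ I, pdot (deriv γ s) (v₂ s) = 0

def tcurvA (γ v₁ v₂ : ℝ → Fin 4 → ℝ) (s : ℝ) : ℝ := -pdot (deriv γ s) (muOf γ v₁ v₂ s)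
def tcurvL (v₁ v₂ : ℝ → Fin 4 → ℝ) (s : ℝ) : ℝ := pdot (deriv v₁ s) (v₂ s)
def tcurvM (γ v₁ v₂ : ℝ → Fin 4 → ℝ) (s : ℝ) : ℝ := -pdot (deriv v₁ s) (muOf γ v₁ v₂ s)
def tcurvN (γ v₁ v₂ : ℝ → Fin 4 → ℝ) (s : ℝ) : ℝ := -pdot (deriv v₂ s) (muOf γ v₁ v₂ s)

/-- `g(s)` for the spacelike total evolute. -/
def sG (α ℓh nh : ℝ → ℝ) (εh : ℝ) (s : ℝ) : ℝ :=
  εh * (α s * deriv nh s - nh s * deriv α s) ^ 2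
    - (ℓh s) ^ 2 * (nh s) ^ 2 * ((nh s) ^ 2 + εh * (α s) ^ 2)

/-- Total evolute (with the `+` sign) of a spacelike framed immersion with curvature
`(α, ℓ̂, 0, n̂)`. -/
def sEvolute (γ f₁ f₂ : ℝ → Fin 4 → ℝ) (α ℓh nh : ℝ → ℝ) (εh : ℝ) (s : ℝ) : Fin 4 → ℝ :=
  (Real.sqrt |sG α ℓh nh εh s|)⁻¹ •
    ((ℓh s * nh s) • (nh s • γ s - α s • f₂ s)
      - (α s * deriv nh s - nh s * deriv α s) • f₁ s)

/-- `f(s)` for the timelike total evolute. -/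
def tF (α ℓh nh : ℝ → ℝ) (s : ℝ) : ℝ :=
  (α s * deriv nh s - nh s * deriv α s) ^ 2
    - (ℓh s) ^ 2 * (nh s) ^ 2 * ((nh s) ^ 2 - (α s) ^ 2)

/-- Total evolute (with the `+` sign) of a timelike framed immersion with curvature
`(α, ℓ̂, 0, n̂)`. -/
def tEvolute (γ f₁ f₂ : ℝ → Fin 4 → ℝ) (α ℓh nh : ℝ → ℝ) (s : ℝ) : Fin 4 → ℝ :=
  (Real.sqrt |tF α ℓh nh s|)⁻¹ •
    ((ℓh s * nh s) • (nh s • γ s - α s • f₂ s)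
      - (α s * deriv nh s - nh s * deriv α s) • f₁ s)

open EvoluteAux in
theorem spacelike_evolute_at_singular_point_of_curve
    (I : Set ℝ) (hI : IsOpen I) (hIc : I.OrdConnected)
    (γ f₁ f₂ : ℝ → Fin 4 → ℝ) (εh : ℝ)
    (hfr : SpacelikeFramed I γ f₁ f₂ εh)
    (α ℓh nh : ℝ → ℝ)
    (hA : ∀ s ∈ I, α s = scurvA γ f₁ f₂ s)
    (hL : ∀ s ∈ I, ℓh s = scurvL εh f₁ f₂ s)
    (hM0 : ∀ s ∈ I, scurvM γ f₁ f₂ s = 0)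
    (hN : ∀ s ∈ I, nh s = scurvN γ f₁ f₂ s)
    (himm : ∀ s ∈ I, ¬(α s = 0 ∧ ℓh s = 0 ∧ nh s = 0))
    (hnd : ∀ s ∈ I, (α s) ^ 2 + εh * (nh s) ^ 2 ≠ 0)
    (hg : ∀ s ∈ I, sG α ℓh nh εh s ≠ 0)
    (s₀ : ℝ) (hs₀ : s₀ ∈ I) (hα0 : α s₀ = 0) :
    (∃ c : ℝ, (c = 1 ∨ c = -1) ∧
      sEvolute γ f₁ f₂ α ℓh nh εh s₀
        = c • ((Real.sqrt |εh * (deriv α s₀) ^ 2 - (ℓh s₀) ^ 2 * (nh s₀) ^ 2|)⁻¹ •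
            ((nh s₀ * ℓh s₀) • γ s₀ + deriv α s₀ • f₁ s₀))) ∧
    (deriv (sEvolute γ f₁ f₂ α ℓh nh εh) s₀ = 0 ↔
      2 * ℓh s₀ * deriv α s₀ * deriv nh s₀
        + nh s₀ * (deriv α s₀ * deriv ℓh s₀ - ℓh s₀ * deriv (deriv α) s₀) = 0) := by
  classical
  have heps := hfr.eps
  have hεne : εh ≠ 0 := by rcases heps with h | h <;> rw [h] <;> norm_num
  have hγa : ∀ s ∈ I, HasDerivAt γ (deriv γ s) s := fun s hs => hda hI hfr.smooth_γ hs
  have hf₁a : ∀ s ∈ I, HasDerivAt f₁ (deriv f₁ s) s := fun s hs => hda hI hfr.smooth_v₁ hs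
  have hf₂a : ∀ s ∈ I, HasDerivAt f₂ (deriv f₂ s) s := fun s hs => hda hI hfr.smooth_v₂ hs
  have hμγ : ∀ s, pdot (muOf γ f₁ f₂ s) (γ s) = 0 := fun s => pdot_trip_left _ _ _
  have hμ1 : ∀ s, pdot (muOf γ f₁ f₂ s) (f₁ s) = 0 := fun s => pdot_trip_mid _ _ _
  have hμ2 : ∀ s, pdot (muOf γ f₁ f₂ s) (f₂ s) = 0 := fun s => pdot_trip_right _ _ _
  have hμμ : ∀ s ∈ I, pdot (muOf γ f₁ f₂ s) (muOf γ f₁ f₂ s) = 1 := by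
    intro s hs
    have h := pdot_trip_trip (γ s) (f₁ s) (f₂ s)
    rw [muOf, h, hfr.ads s hs, hfr.normv₁ s hs, hfr.normv₂ s hs, hfr.orth₁ s hs,
      hfr.orth₂ s hs, hfr.orth₃ s hs, pdot_comm (f₁ s) (γ s), pdot_comm (f₂ s) (γ s),
      pdot_comm (f₂ s) (f₁ s), hfr.orth₁ s hs, hfr.orth₂ s hs, hfr.orth₃ s hs]
    rcases heps with h' | h' <;> rw [h'] <;> norm_num [det3]
  have dγγ : ∀ s ∈ I, pdot (deriv γ s) (γ s) = 0 := by
    intro s hs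
    have h := deriv_pdot_const hI hs (hγa s hs) (hγa s hs) hfr.ads
    have hc := pdot_comm (γ s) (deriv γ s); linarith
  have df₁f₁ : ∀ s ∈ I, pdot (deriv f₁ s) (f₁ s) = 0 := by
    intro s hs
    have h := deriv_pdot_const hI hs (hf₁a s hs) (hf₁a s hs) hfr.normv₁
    have hc := pdot_comm (f₁ s) (deriv f₁ s); linarith
  have df₂f₂ : ∀ s ∈ I, pdot (deriv f₂ s) (f₂ s) = 0 := by
    intro s hs
    have h := deriv_pdot_const hI hs (hf₂a s hs) (hf₂a s hs) hfr.normv₂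
    have hc := pdot_comm (f₂ s) (deriv f₂ s); linarith
  have dγf₁ : ∀ s ∈ I, pdot (γ s) (deriv f₁ s) = 0 := by
    intro s hs
    have h := deriv_pdot_const hI hs (hγa s hs) (hf₁a s hs) hfr.orth₁
    have h2 := hfr.tangent₁ s hs; linarith
  have dγf₂ : ∀ s ∈ I, pdot (γ s) (deriv f₂ s) = 0 := by
    intro s hs
    have h := deriv_pdot_const hI hs (hγa s hs) (hf₂a s hs) hfr.orth₂
    have h2 := hfr.tangent₂ s hs; linarith
  have df₁f₂ : ∀ s ∈ I, pdot (deriv f₁ s) (f₂ s) = -εh * ℓh s := by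
    intro s hs
    have h := hL s hs
    rw [scurvL] at h
    rcases heps with h' | h' <;> rw [h'] at h ⊢ <;> linarith
  have df₂f₁ : ∀ s ∈ I, pdot (f₁ s) (deriv f₂ s) = εh * ℓh s := by
    intro s hs
    have h := deriv_pdot_const hI hs (hf₁a s hs) (hf₂a s hs) hfr.orth₃
    have h2 := df₁f₂ s hs; linarith
  have dμf₁ : ∀ s ∈ I, pdot (deriv f₁ s) (muOf γ f₁ f₂ s) = 0 := fun s hs => hM0 s hs
  have dμf₂ : ∀ s ∈ I, pdot (deriv f₂ s) (muOf γ f₁ f₂ s) = nh s := fun s hs => (hN s hs).symm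
  have dμγ : ∀ s ∈ I, pdot (deriv γ s) (muOf γ f₁ f₂ s) = α s := fun s hs => (hA s hs).symm
  -- Frenet-type formulas
  have Fγ : ∀ s ∈ I, deriv γ s = α s • muOf γ f₁ f₂ s := by
    intro s hs
    refine sub_eq_zero.mp (spanning (x := deriv γ s - α s • muOf γ f₁ f₂ s) heps
      (hfr.ads s hs) (hfr.normv₁ s hs) (hfr.normv₂ s hs) (hfr.orth₁ s hs) (hfr.orth₂ s hs)
      (hfr.orth₃ s hs) ?_ ?_ ?_ ?_)
    · rw [pdot_sub_left, pdot_smul_left, dγγ s hs, hμγ s]; ring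
    · rw [pdot_sub_left, pdot_smul_left, hfr.tangent₁ s hs, hμ1 s]; ring
    · rw [pdot_sub_left, pdot_smul_left, hfr.tangent₂ s hs, hμ2 s]; ring
    · show pdot _ (muOf γ f₁ f₂ s) = 0
      rw [pdot_sub_left, pdot_smul_left, dμγ s hs, hμμ s hs]; ring
  have Ff₁ : ∀ s ∈ I, deriv f₁ s = ℓh s • f₂ s := by
    intro s hs
    refine sub_eq_zero.mp (spanning (x := deriv f₁ s - ℓh s • f₂ s) heps
      (hfr.ads s hs) (hfr.normv₁ s hs) (hfr.normv₂ s hs) (hfr.orth₁ s hs) (hfr.orth₂ s hs)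
      (hfr.orth₃ s hs) ?_ ?_ ?_ ?_)
    · rw [pdot_sub_left, pdot_smul_left, pdot_comm (deriv f₁ s) (γ s), dγf₁ s hs,
        pdot_comm (f₂ s) (γ s), hfr.orth₂ s hs]; ring
    · rw [pdot_sub_left, pdot_smul_left, df₁f₁ s hs, pdot_comm (f₂ s) (f₁ s), hfr.orth₃ s hs]
      ring
    · rw [pdot_sub_left, pdot_smul_left, df₁f₂ s hs, hfr.normv₂ s hs]; ring
    · show pdot _ (muOf γ f₁ f₂ s) = 0
      rw [pdot_sub_left, pdot_smul_left, dμf₁ s hs, pdot_comm (f₂ s) (muOf γ f₁ f₂ s), hμ2 s]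
      ring
  have Ff₂ : ∀ s ∈ I, deriv f₂ s = ℓh s • f₁ s + nh s • muOf γ f₁ f₂ s := by
    intro s hs
    refine sub_eq_zero.mp (spanning
      (x := deriv f₂ s - (ℓh s • f₁ s + nh s • muOf γ f₁ f₂ s)) heps
      (hfr.ads s hs) (hfr.normv₁ s hs) (hfr.normv₂ s hs) (hfr.orth₁ s hs) (hfr.orth₂ s hs)
      (hfr.orth₃ s hs) ?_ ?_ ?_ ?_)
    · rw [pdot_sub_left, pdot_add_left, pdot_smul_left, pdot_smul_left,
        pdot_comm (deriv f₂ s) (γ s), dγf₂ s hs, pdot_comm (f₁ s) (γ s), hfr.orth₁ s hs, hμγ s]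
      ring
    · rw [pdot_sub_left, pdot_add_left, pdot_smul_left, pdot_smul_left,
        pdot_comm (deriv f₂ s) (f₁ s), df₂f₁ s hs, hfr.normv₁ s hs, hμ1 s]
      ring
    · rw [pdot_sub_left, pdot_add_left, pdot_smul_left, pdot_smul_left, df₂f₂ s hs,
        hfr.orth₃ s hs, hμ2 s]
      ring
    · show pdot _ (muOf γ f₁ f₂ s) = 0
      rw [pdot_sub_left, pdot_add_left, pdot_smul_left, pdot_smul_left, dμf₂ s hs,
        pdot_comm (f₁ s) (muOf γ f₁ f₂ s), hμ1 s, hμμ s hs]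
      ring
  -- smoothness and derivatives of the curvature functions
  have smμ : ContDiffOn ℝ (⊤ : ℕ∞) (muOf γ f₁ f₂) I :=
    contDiffOn_tripc hfr.smooth_γ hfr.smooth_v₁ hfr.smooth_v₂
  have smdγ : ContDiffOn ℝ (⊤ : ℕ∞) (deriv γ) I := hfr.smooth_γ.deriv_of_isOpen hI (by simp)
  have smdf₁ : ContDiffOn ℝ (⊤ : ℕ∞) (deriv f₁) I := hfr.smooth_v₁.deriv_of_isOpen hI (by simp)
  have smdf₂ : ContDiffOn ℝ (⊤ : ℕ∞) (deriv f₂) I := hfr.smooth_v₂.deriv_of_isOpen hI (by simp)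
  have smA : ContDiffOn ℝ (⊤ : ℕ∞) (scurvA γ f₁ f₂) I := contDiffOn_pdotc smdγ smμ
  have smL : ContDiffOn ℝ (⊤ : ℕ∞) (scurvL εh f₁ f₂) I :=
    contDiffOn_const.mul (contDiffOn_pdotc smdf₁ hfr.smooth_v₂)
  have smN : ContDiffOn ℝ (⊤ : ℕ∞) (scurvN γ f₁ f₂) I := contDiffOn_pdotc smdf₂ smμ
  obtain ⟨hαH, hα'H⟩ := transfer hI hs₀ hA smA
  obtain ⟨hℓH, -⟩ := transfer hI hs₀ hL smL
  obtain ⟨hnH, hn'H⟩ := transfer hI hs₀ hN smN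
  have hsg0 : sG α ℓh nh εh s₀
      = nh s₀ ^ 2 * (εh * (deriv α s₀) ^ 2 - (ℓh s₀) ^ 2 * (nh s₀) ^ 2) := by
    rw [sG, hα0]; ring
  have hn0 : nh s₀ ≠ 0 := by
    intro h; exact hg s₀ hs₀ (by rw [hsg0, h]; ring)
  have hG₀ne : εh * (deriv α s₀) ^ 2 - (ℓh s₀) ^ 2 * (nh s₀) ^ 2 ≠ 0 := by
    intro h; exact hg s₀ hs₀ (by rw [hsg0, h]; ring)
  constructor
  · -- value of the total evolute at the singular point
    have hRpos : 0 < Real.sqrt |εh * (deriv α s₀) ^ 2 - (ℓh s₀) ^ 2 * (nh s₀) ^ 2| :=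
      Real.sqrt_pos.2 (abs_pos.2 hG₀ne)
    have hsq : Real.sqrt |sG α ℓh nh εh s₀|
        = |nh s₀| * Real.sqrt |εh * (deriv α s₀) ^ 2 - (ℓh s₀) ^ 2 * (nh s₀) ^ 2| := by
      rw [hsg0, abs_mul, abs_of_nonneg (sq_nonneg (nh s₀)), Real.sqrt_mul (sq_nonneg _),
        Real.sqrt_sq_eq_abs]
    refine ⟨if 0 < nh s₀ then 1 else -1, by split_ifs <;> simp, ?_⟩
    simp only [sEvolute]
    rw [hsq, hα0]
    by_cases hpos : 0 < nh s₀
    · rw [if_pos hpos, abs_of_pos hpos]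
      match_scalars <;> field_simp <;> ring
    · rw [if_neg hpos, abs_of_nonpos (le_of_not_gt hpos)]
      match_scalars <;> field_simp <;> ring
  · -- the derivative criterion
    obtain ⟨σ, hσpm, hσpos⟩ : ∃ σ : ℝ, (σ = 1 ∨ σ = -1) ∧ 0 < σ * sG α ℓh nh εh s₀ := by
      rcases (hg s₀ hs₀).lt_or_gt with h | h
      · exact ⟨-1, Or.inr rfl, by linarith⟩
      · exact ⟨1, Or.inl rfl, by linarith⟩
    have hσne : σ ≠ 0 := by rcases hσpm with rfl | rfl <;> norm_num
    have hPH : HasDerivAt (fun s => α s * deriv nh s - nh s * deriv α s)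
        ((deriv α s₀ * deriv nh s₀ + α s₀ * deriv (deriv nh) s₀)
          - (deriv nh s₀ * deriv α s₀ + nh s₀ * deriv (deriv α) s₀)) s₀ :=
      (hαH.mul hn'H).sub (hnH.mul hα'H)
    have hgd : HasDerivAt (sG α ℓh nh εh)
        (2 * nh s₀ ^ 2 * (εh * deriv α s₀ * deriv (deriv α) s₀
          - ℓh s₀ * deriv ℓh s₀ * nh s₀ ^ 2 - 2 * ℓh s₀ ^ 2 * nh s₀ * deriv nh s₀)) s₀ := by
      have h1 := ((hPH.pow 2).const_mul εh).sub
        (((hℓH.pow 2).mul (hnH.pow 2)).mul ((hnH.pow 2).add ((hαH.pow 2).const_mul εh)))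
      unfold sG
      refine h1.congr_deriv ?_
      rw [hα0]; simp only [Pi.mul_apply, Pi.pow_apply, Pi.add_apply, Nat.cast_ofNat, Nat.add_one_sub_one, pow_one, hα0]; ring
    have hDpos : 0 < Real.sqrt (σ * sG α ℓh nh εh s₀) := Real.sqrt_pos.2 hσpos
    have hqH := ((hgd.const_mul σ).sqrt (ne_of_gt hσpos)).inv (ne_of_gt hDpos)
    have hγF : HasDerivAt γ (α s₀ • muOf γ f₁ f₂ s₀) s₀ := by
      have h := hγa s₀ hs₀; rwa [Fγ s₀ hs₀] at h
    have hf₁F : HasDerivAt f₁ (ℓh s₀ • f₂ s₀) s₀ := by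
      have h := hf₁a s₀ hs₀; rwa [Ff₁ s₀ hs₀] at h
    have hf₂F : HasDerivAt f₂ (ℓh s₀ • f₁ s₀ + nh s₀ • muOf γ f₁ f₂ s₀) s₀ := by
      have h := hf₂a s₀ hs₀; rwa [Ff₂ s₀ hs₀] at h
    have hWH := ((hℓH.mul hnH).smul ((hnH.smul hγF).sub (hαH.smul hf₂F))).sub (hPH.smul hf₁F)
    obtain ⟨Cg, hCg⟩ : ∃ x : ℝ, x = (Real.sqrt (σ * sG α ℓh nh εh s₀))⁻¹
        * (deriv ℓh s₀ * nh s₀ ^ 2 + 2 * ℓh s₀ * nh s₀ * deriv nh s₀)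
        + (-(σ * (2 * nh s₀ ^ 2 * (εh * deriv α s₀ * deriv (deriv α) s₀
            - ℓh s₀ * deriv ℓh s₀ * nh s₀ ^ 2 - 2 * ℓh s₀ ^ 2 * nh s₀ * deriv nh s₀))
              / (2 * Real.sqrt (σ * sG α ℓh nh εh s₀)))
            / Real.sqrt (σ * sG α ℓh nh εh s₀) ^ 2) * (ℓh s₀ * nh s₀ ^ 2) := ⟨_, rfl⟩
    obtain ⟨Cf, hCf⟩ : ∃ x : ℝ, x = (Real.sqrt (σ * sG α ℓh nh εh s₀))⁻¹
        * (nh s₀ * deriv (deriv α) s₀)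
        + (-(σ * (2 * nh s₀ ^ 2 * (εh * deriv α s₀ * deriv (deriv α) s₀
            - ℓh s₀ * deriv ℓh s₀ * nh s₀ ^ 2 - 2 * ℓh s₀ ^ 2 * nh s₀ * deriv nh s₀))
              / (2 * Real.sqrt (σ * sG α ℓh nh εh s₀)))
            / Real.sqrt (σ * sG α ℓh nh εh s₀) ^ 2) * (nh s₀ * deriv α s₀) := ⟨_, rfl⟩
    have hEH2 : HasDerivAt (fun s => (Real.sqrt (σ * sG α ℓh nh εh s))⁻¹
        • ((ℓh s * nh s) • (nh s • γ s - α s • f₂ s)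
          - (α s * deriv nh s - nh s * deriv α s) • f₁ s))
        (Cg • γ s₀ + Cf • f₁ s₀) s₀ := by
      have h := hqH.smul hWH
      refine h.congr_deriv ?_
      rw [hCg, hCf]
      simp only [Pi.mul_apply, Pi.smul_apply, Pi.smul_apply', Pi.sub_apply, Pi.inv_apply]
      match_scalars <;> (try simp only [hα0]) <;> ring
    have hEeq : sEvolute γ f₁ f₂ α ℓh nh εh =ᶠ[nhds s₀]
        (fun s => (Real.sqrt (σ * sG α ℓh nh εh s))⁻¹
          • ((ℓh s * nh s) • (nh s • γ s - α s • f₂ s)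
            - (α s * deriv nh s - nh s * deriv α s) • f₁ s)) := by
      have hcont : ContinuousAt (fun t => σ * sG α ℓh nh εh t) s₀ :=
        continuousAt_const.mul hgd.continuousAt
      have hev : ∀ᶠ t in nhds s₀, 0 < σ * sG α ℓh nh εh t := hcont (Ioi_mem_nhds hσpos)
      filter_upwards [hev] with t ht
      have habs : |sG α ℓh nh εh t| = σ * sG α ℓh nh εh t := by
        rcases hσpm with rfl | rfl
        · rw [abs_of_pos (by linarith)]; ring
        · rw [abs_of_neg (by linarith)]; ring
      simp only [sEvolute]
      rw [habs]
    have hder : deriv (sEvolute γ f₁ f₂ α ℓh nh εh) s₀ = Cg • γ s₀ + Cf • f₁ s₀ := by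
      rw [hEeq.deriv_eq]; exact hEH2.deriv
    have hsplit : deriv (sEvolute γ f₁ f₂ α ℓh nh εh) s₀ = 0 ↔ Cg = 0 ∧ Cf = 0 := by
      rw [hder]
      constructor
      · intro h
        have h1 : pdot (Cg • γ s₀ + Cf • f₁ s₀) (γ s₀) = 0 := by rw [h]; simp [pdot]
        have h2 : pdot (Cg • γ s₀ + Cf • f₁ s₀) (f₁ s₀) = 0 := by rw [h]; simp [pdot]
        rw [pdot_add_left, pdot_smul_left, pdot_smul_left, hfr.ads s₀ hs₀,
          pdot_comm (f₁ s₀) (γ s₀), hfr.orth₁ s₀ hs₀] at h1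
        rw [pdot_add_left, pdot_smul_left, pdot_smul_left, hfr.orth₁ s₀ hs₀,
          hfr.normv₁ s₀ hs₀] at h2
        constructor
        · linarith
        · have : Cf * εh = 0 := by linarith
          rcases mul_eq_zero.mp this with h' | h'
          · exact h'
          · exact absurd h' hεne
      · rintro ⟨h1, h2⟩
        rw [h1, h2]; simp
    rw [hsplit]
    have hDne : Real.sqrt (σ * sG α ℓh nh εh s₀) ≠ 0 := ne_of_gt hDpos
    have hD2 : Real.sqrt (σ * sG α ℓh nh εh s₀) ^ 2
        = σ * (nh s₀ ^ 2 * (εh * (deriv α s₀) ^ 2 - (ℓh s₀) ^ 2 * (nh s₀) ^ 2)) := by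
      rw [Real.sq_sqrt hσpos.le, hsg0]
    have expand : ∀ A B g₂ : ℝ,
        ((Real.sqrt (σ * sG α ℓh nh εh s₀))⁻¹ * A
          + (-(g₂ / (2 * Real.sqrt (σ * sG α ℓh nh εh s₀)))
              / Real.sqrt (σ * sG α ℓh nh εh s₀) ^ 2) * B)
          * Real.sqrt (σ * sG α ℓh nh εh s₀) ^ 3
        = A * Real.sqrt (σ * sG α ℓh nh εh s₀) ^ 2 - g₂ * B / 2 := by
      intro A B g₂
      field_simp
      linear_combination (0 : ℝ) * Real.sq_sqrt hσpos.le
    have key1 : Cg * Real.sqrt (σ * sG α ℓh nh εh s₀) ^ 3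
        = (σ * εh * nh s₀ ^ 3) * (deriv α s₀
          * (2 * ℓh s₀ * deriv α s₀ * deriv nh s₀
            + nh s₀ * (deriv α s₀ * deriv ℓh s₀ - ℓh s₀ * deriv (deriv α) s₀))) := by
      have step : Cg * Real.sqrt (σ * sG α ℓh nh εh s₀) ^ 3
          = (deriv ℓh s₀ * nh s₀ ^ 2 + 2 * ℓh s₀ * nh s₀ * deriv nh s₀)
              * Real.sqrt (σ * sG α ℓh nh εh s₀) ^ 2
            - σ * (2 * nh s₀ ^ 2 * (εh * deriv α s₀ * deriv (deriv α) s₀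
              - ℓh s₀ * deriv ℓh s₀ * nh s₀ ^ 2 - 2 * ℓh s₀ ^ 2 * nh s₀ * deriv nh s₀))
              * (ℓh s₀ * nh s₀ ^ 2) / 2 := by
        rw [hCg]; exact expand _ _ _
      rw [step, hD2]
      rcases hσpm with rfl | rfl <;> ring
    have key2 : Cf * Real.sqrt (σ * sG α ℓh nh εh s₀) ^ 3
        = (σ * nh s₀ ^ 4) * (ℓh s₀
          * (2 * ℓh s₀ * deriv α s₀ * deriv nh s₀
            + nh s₀ * (deriv α s₀ * deriv ℓh s₀ - ℓh s₀ * deriv (deriv α) s₀))) := by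
      have step : Cf * Real.sqrt (σ * sG α ℓh nh εh s₀) ^ 3
          = (nh s₀ * deriv (deriv α) s₀) * Real.sqrt (σ * sG α ℓh nh εh s₀) ^ 2
            - σ * (2 * nh s₀ ^ 2 * (εh * deriv α s₀ * deriv (deriv α) s₀
              - ℓh s₀ * deriv ℓh s₀ * nh s₀ ^ 2 - 2 * ℓh s₀ ^ 2 * nh s₀ * deriv nh s₀))
              * (nh s₀ * deriv α s₀) / 2 := by
        rw [hCf]; exact expand _ _ _
      rw [step, hD2]
      rcases hσpm with rfl | rfl <;> ring
    have hDne3 : Real.sqrt (σ * sG α ℓh nh εh s₀) ^ 3 ≠ 0 := pow_ne_zero _ hDne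
    constructor
    · rintro ⟨h1, h2⟩
      have k1 : deriv α s₀ * (2 * ℓh s₀ * deriv α s₀ * deriv nh s₀
          + nh s₀ * (deriv α s₀ * deriv ℓh s₀ - ℓh s₀ * deriv (deriv α) s₀)) = 0 := by
        have hk := key1
        rw [h1, zero_mul] at hk
        have hne : σ * εh * nh s₀ ^ 3 ≠ 0 := mul_ne_zero (mul_ne_zero hσne hεne)
          (pow_ne_zero _ hn0)
        rcases mul_eq_zero.mp hk.symm with h' | h'
        · exact absurd h' hne
        · exact h'
      have k2 : ℓh s₀ * (2 * ℓh s₀ * deriv α s₀ * deriv nh s₀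
          + nh s₀ * (deriv α s₀ * deriv ℓh s₀ - ℓh s₀ * deriv (deriv α) s₀)) = 0 := by
        have hk := key2
        rw [h2, zero_mul] at hk
        have hne : σ * nh s₀ ^ 4 ≠ 0 := mul_ne_zero hσne (pow_ne_zero _ hn0)
        rcases mul_eq_zero.mp hk.symm with h' | h'
        · exact absurd h' hne
        · exact h'
      by_contra hTne
      have ha0' : deriv α s₀ = 0 := by
        rcases mul_eq_zero.mp k1 with h' | h'
        · exact h'
        · exact absurd h' hTne
      have hl0 : ℓh s₀ = 0 := by
        rcases mul_eq_zero.mp k2 with h' | h'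
        · exact h'
        · exact absurd h' hTne
      exact hG₀ne (by rw [ha0', hl0]; ring)
    · intro hT0
      constructor
      · have e1 : Cg * Real.sqrt (σ * sG α ℓh nh εh s₀) ^ 3 = 0 := by rw [key1, hT0]; ring
        rcases mul_eq_zero.mp e1 with h' | h'
        · exact h'
        · exact absurd h' hDne3
      · have e2 : Cf * Real.sqrt (σ * sG α ℓh nh εh s₀) ^ 3 = 0 := by rw [key2, hT0]; ring
        rcases mul_eq_zero.mp e2 with h' | h'
        · exact h'
        · exact absurd h' hDne3
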